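/- Let f(s) = 1 + Σ_{k≥1} a_k s^k/k! be a univariate exponential power series over a Q-algebra and let G(t₁,...,tₙ) = 1 + Σ_{i>0} g_i t^i/i! be a multivariate exponential power series with constant term 1. Then the coefficient of t^i/i! in the composition f(G(t) − 1) equals Σ over partitions λ of the multi-index i of (i! / (m(λ)! λ!)) · a_{ℓ(λ)} · g_λ. -/

import Mathlib

/-!
Write `G - 1 = ∑ c_m t^m`. Since `c_0 = 0`, the coefficient of `t^i` in `(G - 1)^k` only sees the
monomials `0 < m ≤ i`, so it may be computed from the finite sum `∑_{0 < m ≤ i} c_m t^m`. By the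
multinomial theorem it is the sum, over multisets `λ` of `k` nonzero multi-indices summing to `i`,
of `(k! / m(λ)!) ∏ c_{λ_j}`. With `c_m = g_m / m!`, the `k!` cancels the `1 / k!` of `f`, and
`∏ c_{λ_j} = g_λ / λ!`.
-/

open Nat Finset MvPowerSeries

namespace Multiset

variable {α : Type*}

theorem prod_factorial_count_mul_countPerms [DecidableEq α] (P : Multiset α) :
    (∏ x ∈ P.toFinset, (P.count x)!) * P.countPerms = P.card ! := by
  have h := Nat.multinomial_spec P.toFinset P.toFinsupp
  simp only [toFinsupp_apply, toFinset_sum_count_eq] at h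
  rwa [countPerms, Finsupp.multinomial_eq_of_support_subset (toFinsupp_support P).subset]

theorem prod_map_smul {M N : Type*} [CommMonoid M] [CommMonoid N] [MulAction M N]
    [IsScalarTower M N N] [SMulCommClass M N N] (P : Multiset α) (b : α → M) (f : α → N) :
    (P.map fun x => b x • f x).prod = (P.map b).prod • (P.map f).prod := by
  induction P using Multiset.induction with
  | empty => simp
  | cons x P ih => simp only [map_cons, prod_cons, ih, smul_mul_smul_comm]

theorem inv_factorial_card_smul_countPerms_mul_prod_map_inv_smul [DecidableEq α] {R : Type*}
    [CommRing R] [Algebra ℚ R] (P : Multiset α) (w : α → ℚ) (g : α → R) :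
    ((P.card ! : ℚ)⁻¹) • ((P.countPerms : R) * (P.map fun x => (w x)⁻¹ • g x).prod) =
      ((∏ x ∈ P.toFinset, ((P.count x)! : ℚ)) * (P.map w).prod)⁻¹ • (P.map g).prod := by
  have hcount : (∏ x ∈ P.toFinset, ((P.count x)! : ℚ)) * P.countPerms = (P.card ! : ℚ) := by
    exact_mod_cast P.prod_factorial_count_mul_countPerms
  have hperm : (P.countPerms : ℚ) ≠ 0 :=
    right_ne_zero_of_mul (hcount.symm ▸ (by positivity : (P.card ! : ℚ) ≠ 0))
  rw [prod_map_smul, prod_map_inv, ← nsmul_eq_mul, ← Nat.cast_smul_eq_nsmul ℚ, smul_smul,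
    smul_smul, ← hcount]
  congr 1
  field_simp

theorem card_le_degree_sum {σ : Type*} (P : Multiset (σ →₀ ℕ)) (hP : (0 : σ →₀ ℕ) ∉ P) :
    P.card ≤ P.sum.degree := by
  have hpos : ∀ d ∈ P.map Finsupp.degree, 1 ≤ d := by
    simp only [mem_map, forall_exists_index, and_imp]
    rintro _ m hm rfl
    exact Nat.one_le_iff_ne_zero.mpr fun h => hP ((Finsupp.degree_eq_zero_iff m).mp h ▸ hm)
  simpa [map_multiset_sum] using card_nsmul_le_sum hpos

end Multiset

namespace Finsupp

variable {σ : Type*} [DecidableEq σ]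

theorem forall_mem_erase_Iic_sum_iff (P : Multiset (σ →₀ ℕ)) :
    (∀ m ∈ P, m ∈ (Iic P.sum).erase 0) ↔ 0 ∉ P := by
  refine ⟨fun h h0 => by simpa using h 0 h0, fun hP m hm => mem_erase.mpr ⟨?_, ?_⟩⟩
  · rintro rfl
    exact hP hm
  · exact mem_Iic.mpr (Multiset.le_sum_of_mem hm)

/-- A partition of `i` has at most `degree i` parts, all in `(0, i]`, so the partitions can be
enumerated through `Finset.sym`. -/
noncomputable def partitions (i : σ →₀ ℕ) : Finset (Multiset (σ →₀ ℕ)) :=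
  ((range (degree i + 1)).biUnion fun k => (((Iic i).erase 0).sym k).image (↑)).filter
    (·.sum = i)

theorem mem_partitions {i : σ →₀ ℕ} {P : Multiset (σ →₀ ℕ)} :
    P ∈ i.partitions ↔ 0 ∉ P ∧ P.sum = i := by
  simp only [partitions, mem_filter, mem_biUnion, mem_range, mem_image, and_congr_left_iff]
  rintro rfl
  constructor
  · rintro ⟨k, -, Q, hQ, rfl⟩
    exact (forall_mem_erase_Iic_sum_iff _).mp (mem_sym_iff.mp hQ)
  · intro hP
    exact ⟨P.card, Nat.lt_succ_of_le (P.card_le_degree_sum hP), ⟨P, rfl⟩,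
      mem_sym_iff.mpr ((forall_mem_erase_Iic_sum_iff P).mpr hP), rfl⟩

theorem filter_card_partitions (i : σ →₀ ℕ) (k : ℕ) :
    {P ∈ i.partitions | P.card = k} =
      (((Iic i).erase 0).sym k |>.filter fun Q : Sym _ k => (Q : Multiset _).sum = i).map
        ⟨Sym.toMultiset, Sym.coe_injective⟩ := by
  ext P
  simp only [mem_filter, mem_partitions, mem_map, Function.Embedding.coeFn_mk]
  constructor
  · rintro ⟨⟨hP, rfl⟩, rfl⟩
    exact ⟨⟨P, rfl⟩, ⟨mem_sym_iff.mpr ((forall_mem_erase_Iic_sum_iff P).mpr hP), rfl⟩, rfl⟩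
  · rintro ⟨Q, ⟨hQ, rfl⟩, rfl⟩
    exact ⟨⟨(forall_mem_erase_Iic_sum_iff _).mp (mem_sym_iff.mp hQ), rfl⟩, Q.2⟩

end Finsupp

namespace MvPowerSeries

variable {σ R : Type*} [CommSemiring R]

theorem coeff_pow_congr {p q : MvPowerSeries σ R} {i : σ →₀ ℕ}
    (h : ∀ m ≤ i, coeff m p = coeff m q) (k : ℕ) : coeff i (p ^ k) = coeff i (q ^ k) := by
  classical
  simp only [coeff_pow]
  refine sum_congr rfl fun l hl => prod_congr rfl fun t ht => h _ ?_
  rw [← (mem_finsuppAntidiag.mp hl).1]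
  exact single_le_sum_of_canonicallyOrdered ht

theorem prod_map_monomial (P : Multiset (σ →₀ ℕ)) (c : (σ →₀ ℕ) → R) :
    (P.map fun m => monomial m (c m)).prod = monomial P.sum (P.map c).prod := by
  induction P using Multiset.induction with
  | empty => simp [monomial_zero_one]
  | cons m P ih => simp [ih, monomial_mul_monomial]

variable [DecidableEq σ]

theorem coeff_pow_eq_sum_partitions {p : MvPowerSeries σ R} (hp : constantCoeff p = 0)
    (i : σ →₀ ℕ) (k : ℕ) :
    coeff i (p ^ k) =
      ∑ P ∈ i.partitions with P.card = k,
        (P.countPerms : R) * (P.map fun m => coeff m p).prod := by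
  set s := (Iic i).erase 0
  have htrunc : ∀ m ≤ i, coeff m p = coeff m (∑ m ∈ s, monomial m (coeff m p)) := by
    intro m hm
    simp only [map_sum, coeff_monomial, sum_ite_eq]
    split_ifs with hs
    · rfl
    · obtain rfl : m = 0 := by simpa [s, hm] using hs
      simpa using hp
  rw [coeff_pow_congr htrunc, sum_pow, map_sum, Finsupp.filter_card_partitions, sum_map,
    sum_filter]
  refine sum_congr rfl fun Q _ => ?_
  rw [prod_map_monomial, ← map_natCast (C (σ := σ)), coeff_C_mul, coeff_monomial,
    mul_ite, mul_zero]
  exact if_congr eq_comm rfl rfl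

end MvPowerSeries

theorem stmt5_general {R : Type*} [CommRing R] [Algebra ℚ R] {n : ℕ}
    (a : ℕ → R)
    (g : (Fin n →₀ ℕ) → R)
    (G : MvPowerSeries (Fin n) R)
    (hG : ∀ i : Fin n →₀ ℕ,
      MvPowerSeries.coeff i G =
        if i = 0 then 1 else (∏ j, ((i j)! : ℚ))⁻¹ • g i)
    (H : MvPowerSeries (Fin n) R)
    (hH : ∀ i : Fin n →₀ ℕ,
      MvPowerSeries.coeff i H =
        ∑ k ∈ Finset.range ((∑ j, i j) + 1),
          ((k ! : ℚ)⁻¹) • (a k * MvPowerSeries.coeff i ((G - 1) ^ k)))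
    (i : Fin n →₀ ℕ) :
    (∏ j, ((i j)! : ℚ)) • MvPowerSeries.coeff i H =
      ∑ᶠ (P : Multiset (Fin n →₀ ℕ)) (_ : (0 : Fin n →₀ ℕ) ∉ P ∧ P.sum = i),
        ((∏ j, ((i j)! : ℚ)) /
            ((∏ x ∈ P.toFinset, ((P.count x)! : ℚ)) *
              (P.map fun p => ∏ j, ((p j)! : ℚ)).prod)) •
          (a P.card * (P.map g).prod) := by
  have hG₀ : constantCoeff (G - 1) = 0 := by
    rw [← coeff_zero_eq_constantCoeff_apply, map_sub, hG, coeff_one, if_pos rfl, if_pos rfl,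
      sub_self]
  have hcoeff : ∀ P ∈ i.partitions, (P.map fun m => coeff m (G - 1)) =
      P.map fun m => (∏ j, ((m j)! : ℚ))⁻¹ • g m := by
    refine fun P hP => Multiset.map_congr rfl fun m hm => ?_
    have hm0 : m ≠ 0 := fun h => (Finsupp.mem_partitions.mp hP).1 (h ▸ hm)
    rw [map_sub, hG, coeff_one, if_neg hm0, if_neg hm0, sub_zero]
  have hcard : ∀ P ∈ i.partitions, P.card ∈ range (i.degree + 1) := fun P hP => by
    obtain ⟨hP0, rfl⟩ := Finsupp.mem_partitions.mp hP
    exact mem_range_succ_iff.mpr (P.card_le_degree_sum hP0)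
  rw [finsum_cond_eq_sum_of_cond_iff _ fun _ => Finsupp.mem_partitions.symm, hH,
    ← Finsupp.degree_eq_sum, smul_sum, ← sum_fiberwise_of_maps_to hcard]
  refine sum_congr rfl fun k _ => ?_
  rw [coeff_pow_eq_sum_partitions hG₀, mul_sum, smul_sum, smul_sum]
  refine sum_congr rfl fun P hPk => ?_
  obtain ⟨hP, rfl⟩ := mem_filter.mp hPk
  rw [hcoeff P hP, ← mul_smul_comm,
    Multiset.inv_factorial_card_smul_countPerms_mul_prod_map_inv_smul, mul_smul_comm, smul_smul,
    div_eq_mul_inv]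

/-- **Multivariate Faà di Bruno formula (univariate composed with multivariate).**
Let `f(s) = 1 + ∑_{k ≥ 1} a_k s^k / k!` and let `G = 1 + ∑_{i > 0} g_i t^i / i!` be a
multivariate exponential power series with constant term `1`. The composition
`H = f(G - 1)` is computed coefficientwise as `∑_k (a_k / k!) ⬝ coeff i ((G - 1)^k)`
(truncated at `k = |i|` since `G - 1` has zero constant term). Then the coefficient of
`t^i / i!` in `H` equals the sum over partitions `λ` of the multi-index `i` of
`(i! / (m(λ)! λ!)) · a_{ℓ(λ)} · g_λ`. -/
theorem stmt5 {R : Type*} [CommRing R] [Algebra ℚ R] {n : ℕ}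
    (a : ℕ → R) (ha : a 0 = 1)
    (g : (Fin n →₀ ℕ) → R)
    (G : MvPowerSeries (Fin n) R)
    (hG : ∀ i : Fin n →₀ ℕ,
      MvPowerSeries.coeff i G =
        if i = 0 then 1 else (∏ j, ((i j)! : ℚ))⁻¹ • g i)
    (H : MvPowerSeries (Fin n) R)
    (hH : ∀ i : Fin n →₀ ℕ,
      MvPowerSeries.coeff i H =
        ∑ k ∈ Finset.range ((∑ j, i j) + 1),
          ((k ! : ℚ)⁻¹) • (a k * MvPowerSeries.coeff i ((G - 1) ^ k)))
    (i : Fin n →₀ ℕ) :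
    (∏ j, ((i j)! : ℚ)) • MvPowerSeries.coeff i H =
      ∑ᶠ (P : Multiset (Fin n →₀ ℕ)) (_ : (0 : Fin n →₀ ℕ) ∉ P ∧ P.sum = i),
        ((∏ j, ((i j)! : ℚ)) /
            ((∏ x ∈ P.toFinset, ((P.count x)! : ℚ)) *
              (P.map fun p => ∏ j, ((p j)! : ℚ)).prod)) •
          (a P.card * (P.map g).prod) :=
  stmt5_general a g G hG H hH i
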